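/- arXiv:1910.09149 — 4 statements merged into one kernel-verified Lean document; each statement's English description precedes it below -/
import Mathlib

section
/- Let η, c, θ, λ ∈ ℝ with 0 < η ≤ 1 and c > 0. If θ/η + c < λ and λ < θ·η (i.e., the dual-decomposition conditions for discharging at full power and charging at full power hold simultaneously), then θ < 0 and λ < 0. -/
theorem mul_le_div_self_of_le_one {K : Type*} [Field K] [LinearOrder K] [IsStrictOrderedRing K]
    {a b : K} (ha : 0 ≤ a) (hb0 : 0 < b) (hb1 : b ≤ 1) : a * b ≤ a / b :=
  calc a * b ≤ a := mul_le_of_le_one_right ha hb1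
    _ ≤ a / b := le_div_self ha hb0 hb1

/-- Remark 2: necessary conditions for spontaneous charging and discharging.
If the full-discharge condition `θ/η + c < λ` and the full-charge condition `λ < θ·η`
hold simultaneously (with `0 < η ≤ 1`, `c > 0`), then `θ < 0` and `λ < 0`. -/
theorem simultaneous_charge_discharge_negative_price
    (η c θ lam : ℝ) (hη0 : 0 < η) (hη1 : η ≤ 1) (hc : 0 < c)
    (hd : θ / η + c < lam) (hch : lam < θ * η) :
    θ < 0 ∧ lam < 0 := by
  have hθ : θ < 0 := by
    by_contra! hθ
    have := mul_le_div_self_of_le_one hθ hη0 hη1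
    linarith
  exact ⟨hθ, hch.trans (mul_neg_of_neg_of_pos hθ hη0)⟩
end

section
/- Fix real numbers v1 ≤ v2 ≤ v3, an efficiency η with 0 < η ≤ 1, and a marginal discharge cost c ≥ 0, and let g : ℝ → ℝ be the associated piecewise marginal-value map (defined in the context). Then g is monotone nondecreasing on ℝ. -/
/-- The piecewise marginal-value map `g` from Theorem 1: the marginal value
`q_{t−1}(e)` of stored energy given a price realization, where `v1, v2, v3` are the
next-period marginal values at the full-charge, idle, and full-discharge ending SoC. -/
noncomputable def marginalValue (v1 v2 v3 η c : ℝ) (p : ℝ) : ℝ :=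
  if p < v1 * η then v1
  else if p < v2 * η then p / η
  else if p < max (v2 / η + c) 0 then v2
  else if p < max (v3 / η + c) 0 then η * (p - c)
  else v3

/-! The map tests the price against the thresholds `v1 * η`, `v2 * η`, `max (v2 / η + c) 0`,
`max (v3 / η + c) 0` in turn. Each branch is monotone, with values in `{v1}`, `[v1, v2]`, `{v2}`,
`[v2, v3]`, `{v3}` respectively, so the map is monotone even though the thresholds themselves
need not be ordered: a monotone `if x < t then f x else h x` only needs `f ≤ m ≤ h` across
`t`. -/

open Set

theorem MonotoneOn.ite_lt {α β : Type*} [LinearOrder α] [Preorder β] {s : Set α} {t : α}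
    {f h : α → β} (m : β) (hf : MonotoneOn f (s ∩ Iio t)) (hh : MonotoneOn h (s ∩ Ici t))
    (hfm : ∀ x ∈ s, x < t → f x ≤ m) (hmh : ∀ y ∈ s, t ≤ y → m ≤ h y) :
    MonotoneOn (fun x => if x < t then f x else h x) s := by
  intro x hx y hy hxy
  by_cases hxt : x < t <;> by_cases hyt : y < t <;> simp only [hxt, hyt, if_true, if_false]
  · exact hf ⟨hx, hxt⟩ ⟨hy, hyt⟩ hxy
  · exact (hfm x hx hxt).trans (hmh y hy (not_lt.1 hyt))
  · exact absurd (hxy.trans_lt hyt) hxt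
  · exact hh ⟨hx, not_lt.1 hxt⟩ ⟨hy, not_lt.1 hyt⟩ hxy

theorem Monotone.ite_lt {α β : Type*} [LinearOrder α] [Preorder β] {t : α} {f h : α → β}
    (m : β) (hf : MonotoneOn f (Iio t)) (hh : MonotoneOn h (Ici t))
    (hfm : ∀ x < t, f x ≤ m) (hmh : ∀ y, t ≤ y → m ≤ h y) :
    Monotone fun x => if x < t then f x else h x :=
  monotoneOn_univ.1 <| .ite_lt m (by rwa [univ_inter]) (by rwa [univ_inter])
    (fun x _ => hfm x) fun y _ => hmh y

theorem le_mul_sub_of_div_add_le {η v c p : ℝ} (hη : 0 < η) (hp : v / η + c ≤ p) :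
    v ≤ η * (p - c) := by
  rw [← div_le_iff₀' hη]; linarith

theorem mul_sub_le_of_le_div_add {η v c p : ℝ} (hη : 0 < η) (hp : p ≤ v / η + c) :
    η * (p - c) ≤ v := by
  rw [← le_div_iff₀' hη]; linarith

theorem marginalValue_monotone_general
    (v1 v2 v3 η c : ℝ) (h12 : v1 ≤ v2) (h23 : v2 ≤ v3)
    (hη0 : 0 < η) :
    Monotone (marginalValue v1 v2 v3 η c) := by
  have v2_le_discharge (p : ℝ) (hp : max (v2 / η + c) 0 ≤ p) : v2 ≤ η * (p - c) :=
    le_mul_sub_of_div_add_le hη0 ((le_max_left _ _).trans hp)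
  have discharge_mono : MonotoneOn (fun p => if p < max (v3 / η + c) 0 then η * (p - c) else v3)
      (Ici (max (v2 / η + c) 0)) := by
    refine .ite_lt v3 (fun _ _ _ _ hpq => by gcongr) monotoneOn_const (fun p hpA hpB => ?_)
      fun _ _ _ => le_rfl
    -- `p ≥ 0`, so the cap `max _ 0` of the upper threshold is inactive
    have hp0 : 0 ≤ p := (le_max_right _ _).trans hpA
    exact mul_sub_le_of_le_div_add hη0 ((lt_max_iff.1 hpB).resolve_right hp0.not_gt).le
  set idle := fun p => if p < max (v2 / η + c) 0 then v2
    else if p < max (v3 / η + c) 0 then η * (p - c) else v3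
  have v2_le_idle (p : ℝ) : v2 ≤ idle p := by
    simp only [idle]
    split_ifs with hA
    exacts [le_rfl, v2_le_discharge p (not_lt.1 hA), h23]
  have idle_mono : Monotone idle :=
    .ite_lt v2 monotoneOn_const discharge_mono (fun _ _ => le_rfl) fun y hy => by
      split_ifs
      exacts [v2_le_discharge y hy, h23]
  have charge_mono : Monotone fun p => if p < v2 * η then p / η else idle p :=
    .ite_lt v2 (fun _ _ _ _ hpq => by gcongr) (idle_mono.monotoneOn _)
      (fun p hp => (div_le_iff₀ hη0).2 hp.le) fun y _ => v2_le_idle y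
  refine .ite_lt v1 monotoneOn_const (charge_mono.monotoneOn _) (fun _ _ => le_rfl) fun y hy => ?_
  split
  exacts [(le_div_iff₀ hη0).2 hy, h12.trans (v2_le_idle y)]

/-- The piecewise marginal-value map is monotone nondecreasing in the price. -/
theorem marginalValue_monotone
    (v1 v2 v3 η c : ℝ) (h12 : v1 ≤ v2) (h23 : v2 ≤ v3)
    (hη0 : 0 < η) (hη1 : η ≤ 1) (hc : 0 ≤ c) :
    Monotone (marginalValue v1 v2 v3 η c) :=
  marginalValue_monotone_general v1 v2 v3 η c h12 h23 hη0
end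

section
/- Fix real numbers v1 ≤ v2 ≤ v3, an efficiency η with 0 < η ≤ 1, and a marginal discharge cost c ≥ 0, and let g : ℝ → ℝ be the associated piecewise marginal-value map (defined in the context). Then for every x ∈ ℝ with v1 ≤ x < v2, the sublevel set {λ ∈ ℝ : g(λ) ≤ x} is exactly the interval (−∞, x·η]. -/
/-!
Split the price axis at `v1 η` and `v2 η`. Below `v1 η` the value is `v1 ≤ x` and
`p < v1 η ≤ x η`; between them it is `p / η`, which is `≤ x` iff `p ≤ x η`; from `v2 η` on
every later branch is at least `v2 > x` (using `v2 ≤ v3`), while `p ≥ v2 η > x η`.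
-/

section MarginalValue

variable {v1 v2 v3 η c p : ℝ}

theorem marginalValue_of_lt (hp : p < v1 * η) : marginalValue v1 v2 v3 η c p = v1 :=
  if_pos hp

theorem marginalValue_of_le_of_lt (hp1 : v1 * η ≤ p) (hp2 : p < v2 * η) :
    marginalValue v1 v2 v3 η c p = p / η := by
  rw [marginalValue, if_neg hp1.not_gt, if_pos hp2]

theorem le_marginalValue_of_le (h23 : v2 ≤ v3) (hη : 0 < η) (hp : v2 * η ≤ p) :
    v2 ≤ marginalValue v1 v2 v3 η c p := by
  unfold marginalValue
  split_ifs with h1 h2 h3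
  · exact (lt_of_mul_lt_mul_right (hp.trans_lt h1) hη.le).le
  · exact absurd hp h2.not_ge
  · exact le_rfl
  · have hv2 : v2 / η ≤ p - c := by linarith [le_max_left (v2 / η + c) 0, not_lt.1 h3]
    exact (div_le_iff₀' hη).1 hv2
  · exact h23

end MarginalValue

theorem marginalValue_sublevel_middle_charge_general
    (v1 v2 v3 η c : ℝ) (h23 : v2 ≤ v3)
    (hη0 : 0 < η) :
    ∀ x : ℝ, v1 ≤ x → x < v2 →
      {p : ℝ | marginalValue v1 v2 v3 η c p ≤ x} = Set.Iic (x * η) := by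
  intro x hx1 hx2
  ext p
  simp only [Set.mem_ofPred_eq, Set.mem_Iic]
  rcases lt_or_ge p (v1 * η) with hp1 | hp1
  · rw [marginalValue_of_lt hp1]
    exact iff_of_true hx1 (hp1.le.trans (mul_le_mul_of_nonneg_right hx1 hη0.le))
  rcases lt_or_ge p (v2 * η) with hp2 | hp2
  · rw [marginalValue_of_le_of_lt hp1 hp2]
    exact div_le_iff₀ hη0
  · exact iff_of_false (hx2.trans_le (le_marginalValue_of_le h23 hη0 hp2)).not_ge
      ((mul_lt_mul_of_pos_right hx2 hη0).trans_le hp2).not_ge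

/-- Second case of Theorem 1: for `v1 ≤ x < v2`, the sublevel set
`{p : g p ≤ x}` equals the interval `(−∞, x·η]`. -/
theorem marginalValue_sublevel_middle_charge
    (v1 v2 v3 η c : ℝ) (h12 : v1 ≤ v2) (h23 : v2 ≤ v3)
    (hη0 : 0 < η) (hη1 : η ≤ 1) (hc : 0 ≤ c) :
    ∀ x : ℝ, v1 ≤ x → x < v2 →
      {p : ℝ | marginalValue v1 v2 v3 η c p ≤ x} = Set.Iic (x * η) :=
  marginalValue_sublevel_middle_charge_general v1 v2 v3 η c h23 hη0
end

section
/- Fix real numbers v1 ≤ v2 ≤ v3, an efficiency η with 0 < η ≤ 1, and a marginal discharge cost c ≥ 0, and let g : ℝ → ℝ be the associated piecewise marginal-value map (defined in the context). Then for every x ∈ ℝ with v2 ≤ x < v3, writing m = max(x/η + c, 0), the sublevel set {λ ∈ ℝ : g(λ) ≤ x} satisfies (−∞, m) ⊆ {λ : g(λ) ≤ x} ⊆ (−∞, m]. -/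
/-! Below the threshold `m = max (x / η + c) 0` every branch of `g` is at most `x`:
the two charging branches and the idle branch are bounded by `v2 ≤ x`, the discharging
branch `η (p - c)` is below `x` exactly when `p < x / η + c`, and the last branch starts at
`max (v3 / η + c) 0 ≥ m`. Conversely, each branch on which `g p ≤ x` ends at or before `m`;
for the charging branches this is `v η ≤ max (v / η + c) 0`, which holds because `η ≤ 1`
and `c ≥ 0`. -/

section

variable {η c : ℝ}

lemma max_div_add_monotone (hη : 0 < η) : Monotone fun x : ℝ => max (x / η + c) 0 :=
  fun _ _ h => max_le_max (by gcongr) le_rfl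

lemma mul_le_max_div_add (hη0 : 0 < η) (hη1 : η ≤ 1) (hc : 0 ≤ c) (y : ℝ) :
    y * η ≤ max (y / η + c) 0 := by
  rcases le_or_gt y 0 with hy | hy
  · exact (mul_nonpos_of_nonpos_of_nonneg hy hη0.le).trans (le_max_right _ _)
  · calc y * η ≤ y := mul_le_of_le_one_right hy.le hη1
      _ ≤ y / η := le_div_self hy.le hη0 hη1
      _ ≤ y / η + c := le_add_of_nonneg_right hc
      _ ≤ max (y / η + c) 0 := le_max_left _ _

variable {v1 v2 v3 x p : ℝ}

lemma marginalValue_le_of_lt_max (h12 : v1 ≤ v2) (hx2 : v2 ≤ x) (hx3 : x ≤ v3) (hη : 0 < η)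
    (hp : p < max (x / η + c) 0) : marginalValue v1 v2 v3 η c p ≤ x := by
  unfold marginalValue
  split_ifs with h1 h2 h3 h4
  · exact h12.trans hx2
  · exact ((div_lt_iff₀ hη).2 h2).le.trans hx2
  · exact hx2
  · have hp0 : 0 ≤ p := (le_max_right _ _).trans (not_lt.1 h3)
    have hpx : p - c < x / η := by
      rcases lt_max_iff.1 hp with h | h <;> linarith
    exact ((lt_div_iff₀' hη).1 hpx).le
  · exact absurd (hp.trans_le (max_div_add_monotone hη hx3)) h4

lemma le_max_of_marginalValue_le (h12 : v1 ≤ v2) (hx2 : v2 ≤ x) (hx3 : x < v3) (hη0 : 0 < η)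
    (hη1 : η ≤ 1) (hc : 0 ≤ c) (hp : marginalValue v1 v2 v3 η c p ≤ x) :
    p ≤ max (x / η + c) 0 := by
  have charging {y : ℝ} (hy : y ≤ x) (h : p < y * η) : p ≤ max (x / η + c) 0 :=
    h.le.trans ((mul_le_max_div_add hη0 hη1 hc y).trans (max_div_add_monotone hη0 hy))
  unfold marginalValue at hp
  split_ifs at hp with h1 h2 h3 h4
  · exact charging (h12.trans hx2) h1
  · exact charging hx2 h2
  · exact h3.le.trans (max_div_add_monotone hη0 hx2)
  · have : p - c ≤ x / η := (le_div_iff₀' hη0).2 hp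
    exact le_max_of_le_left (by linarith)
  · exact absurd hp (not_le.2 hx3)

end

theorem marginalValue_sublevel_middle_discharge_general
    (v1 v2 v3 η c : ℝ) (h12 : v1 ≤ v2)
    (hη0 : 0 < η) (hη1 : η ≤ 1) (hc : 0 ≤ c) :
    ∀ x : ℝ, v2 ≤ x → x < v3 →
      Set.Iio (max (x / η + c) 0) ⊆ {p : ℝ | marginalValue v1 v2 v3 η c p ≤ x} ∧
      {p : ℝ | marginalValue v1 v2 v3 η c p ≤ x} ⊆ Set.Iic (max (x / η + c) 0) :=
  fun _ hx2 hx3 =>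
    ⟨fun _ hp => marginalValue_le_of_lt_max h12 hx2 hx3.le hη0 hp,
     fun _ hp => le_max_of_marginalValue_le h12 hx2 hx3 hη0 hη1 hc hp⟩

/-- Third case of Theorem 1: for `v2 ≤ x < v3`, with `m = max (x/η + c) 0`,
the sublevel set `{p : g p ≤ x}` is sandwiched between `(−∞, m)` and `(−∞, m]`. -/
theorem marginalValue_sublevel_middle_discharge
    (v1 v2 v3 η c : ℝ) (h12 : v1 ≤ v2) (h23 : v2 ≤ v3)
    (hη0 : 0 < η) (hη1 : η ≤ 1) (hc : 0 ≤ c) :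
    ∀ x : ℝ, v2 ≤ x → x < v3 →
      Set.Iio (max (x / η + c) 0) ⊆ {p : ℝ | marginalValue v1 v2 v3 η c p ≤ x} ∧
      {p : ℝ | marginalValue v1 v2 v3 η c p ≤ x} ⊆ Set.Iic (max (x / η + c) 0) :=
  marginalValue_sublevel_middle_discharge_general v1 v2 v3 η c h12 hη0 hη1 hc
end
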